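/- Let A ≤ B < Y be admissible partitions of C^s. If a box i ∈ Y is locally maximal with respect to A, then i is locally maximal with respect to B. -/

import Mathlib

namespace BrinThompson

/-- A finite binary word. -/
abbrev Word : Type := List Bool

/-- A box in `C^s`, recorded as the tuple of binary words whose cylinders form the product. -/
abbrev Box (s : ℕ) : Type := Fin s → Word

/-- The box obtained from `b` by replacing its `i`-th word `u` by `u ++ [bit]`. -/
def expandBox {s : ℕ} (i : Fin s) (bit : Bool) (b : Box s) : Box s :=
  Function.update b i (b i ++ [bit])

/-- `B` is obtained from `A` by a simple expansion of colour `i`: one box of `A` is replaced by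
its two halves in direction `i`. -/
def SimpleExpansionC {s : ℕ} (i : Fin s) (A B : Finset (Box s)) : Prop :=
  ∃ b ∈ A, B = insert (expandBox i false b) (insert (expandBox i true b) (A.erase b))

/-- `B` is obtained from `A` by a simple expansion of some colour. -/
def SimpleExpansion {s : ℕ} (A B : Finset (Box s)) : Prop :=
  ∃ i : Fin s, SimpleExpansionC i A B

/-- `Expands A B` (`A ≤ B`): `B` is a descendant of `A`, i.e. `B` is obtained from `A` by
finitely many simple expansions. -/
def Expands {s : ℕ} (A B : Finset (Box s)) : Prop :=
  Relation.ReflTransGen SimpleExpansion A B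

/-- The one-element partition `{C^s}`. -/
def trivialPartition (s : ℕ) : Finset (Box s) := {fun _ => []}

/-- An admissible partition of `C^s`. -/
def Admissible {s : ℕ} (A : Finset (Box s)) : Prop :=
  Expands (trivialPartition s) A

/-- `M = glb_A(Ω)`: the greatest lower bound of `Ω` above `A`. -/
def IsGlbAbove {s : ℕ} (A : Finset (Box s)) (Ω : Set (Finset (Box s)))
    (M : Finset (Box s)) : Prop :=
  Admissible M ∧ Expands A M ∧ (∀ B ∈ Ω, Expands M B) ∧
    ∀ N : Finset (Box s), Admissible N → Expands A N → (∀ B ∈ Ω, Expands N B) → Expands N M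

/-- The depth of a box: the total length of its defining words. -/
def depth {s : ℕ} (b : Box s) : ℕ := ∑ i, (b i).length

/-- `BoxLE m b`: the box `m` contains the box `b`, i.e. each word of `m` is a prefix of the
corresponding word of `b`. -/
def BoxLE {s : ℕ} (m b : Box s) : Prop := ∀ i, m i <+: b i

/-- A box `y ∈ Y` is locally maximal with respect to `A`: for the box `m` of `A` containing `y`,
every box `j ∈ Y` contained in `m` satisfies `l(A,j) ≤ l(A,y)`, i.e. `depth j ≤ depth y`. -/
def LocallyMaximal {s : ℕ} (A Y : Finset (Box s)) (y : Box s) : Prop :=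
  ∀ m ∈ A, BoxLE m y → ∀ j ∈ Y, BoxLE m j → depth j ≤ depth y

/-- There is an edge of colour `i` between `y, y' ∈ Y` in the graph `Γ_A`: some simple
contraction `Z` of `Y` of colour `i` with `A ≤ Z` merges exactly `y` and `y'`. -/
def GammaAdjC {s : ℕ} (A Y : Finset (Box s)) (i : Fin s) (y y' : Box s) : Prop :=
  y ≠ y' ∧ y ∈ Y ∧ y' ∈ Y ∧
    ∃ Z : Finset (Box s), Admissible Z ∧ SimpleExpansionC i Z Y ∧ Expands A Z ∧
      Y \ Z = {y, y'}

/-- The graph `Γ_A` (with its colours forgotten). -/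
def Gamma {s : ℕ} (A Y : Finset (Box s)) : SimpleGraph (Box s) where
  Adj y y' := ∃ i : Fin s, GammaAdjC A Y i y y'
  symm := by
    constructor; rintro y y' ⟨i, hne, hy, hy', Z, h1, h2, h3, h4⟩
    exact ⟨i, hne.symm, hy', hy, Z, h1, h2, h3, by rwa [Finset.pair_comm]⟩
  loopless := by constructor; rintro y ⟨i, hne, _⟩; exact hne rfl

/-- The geometric realization of the order complex (nerve) of the relation `le` on `P`:
finitely supported probability densities on `P` whose support is a chain, topologised as a
subspace of `P → ℝ`. -/
abbrev OrderComplex (P : Type*) (le : P → P → Prop) : Type _ :=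
  {f : P → ℝ // (Function.support f).Finite ∧ (∀ x, 0 ≤ f x) ∧
    IsChain le (Function.support f) ∧ ∑ᶠ x, f x = 1}

/-- A space is `t`-connected if it is nonempty, path-connected and its homotopy groups
`π_k` vanish for `1 ≤ k ≤ t`. -/
def TConnected (t : ℕ) (X : Type*) [TopologicalSpace X] : Prop :=
  Nonempty X ∧ PathConnectedSpace X ∧
    ∀ k : ℕ, 1 ≤ k → k ≤ t → ∀ x : X, Subsingleton (HomotopyGroup (Fin k) X x)

lemma boxLE_refl {s : ℕ} (b : Box s) : BoxLE b b := fun _ => List.prefix_refl _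

lemma BoxLE.trans {s : ℕ} {a b c : Box s} (hab : BoxLE a b) (hbc : BoxLE b c) : BoxLE a c :=
  fun k => (hab k).trans (hbc k)

lemma boxLE_expandBox {s : ℕ} (k : Fin s) (bit : Bool) (b : Box s) :
    BoxLE b (expandBox k bit b) := by
  intro l
  rcases eq_or_ne l k with rfl | hlk
  · simp [expandBox]
  · simp [expandBox, Function.update_of_ne hlk]

lemma SimpleExpansion.exists_boxLE {s : ℕ} {A B : Finset (Box s)} (h : SimpleExpansion A B) :
    ∀ b ∈ B, ∃ a ∈ A, BoxLE a b := by
  obtain ⟨k, a, ha, rfl⟩ := h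
  intro b hb
  simp only [Finset.mem_insert, Finset.mem_erase] at hb
  rcases hb with rfl | rfl | ⟨_, hbA⟩
  · exact ⟨a, ha, boxLE_expandBox _ _ _⟩
  · exact ⟨a, ha, boxLE_expandBox _ _ _⟩
  · exact ⟨b, hbA, boxLE_refl b⟩

lemma Expands.exists_boxLE {s : ℕ} {A B : Finset (Box s)} (h : Expands A B) :
    ∀ b ∈ B, ∃ a ∈ A, BoxLE a b := by
  induction h with
  | refl => exact fun b hb => ⟨b, hb, boxLE_refl b⟩
  | tail _ hstep ih =>
    intro b hb
    obtain ⟨c, hc, hcb⟩ := hstep.exists_boxLE b hb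
    obtain ⟨a, ha, hac⟩ := ih c hc
    exact ⟨a, ha, hac.trans hcb⟩

lemma LocallyMaximal.of_forall_exists_boxLE {s : ℕ} {A B Y : Finset (Box s)} {y : Box s}
    (hmax : LocallyMaximal A Y y) (hBA : ∀ b ∈ B, ∃ a ∈ A, BoxLE a b) :
    LocallyMaximal B Y y := by
  intro m hm hmy j hj hmj
  obtain ⟨a, ha, ham⟩ := hBA m hm
  exact hmax a ha (ham.trans hmy) j hj (ham.trans hmj)

theorem locallyMaximal_of_le_general (s : ℕ)
    (A B Y : Finset (Box s))
    (hAB : Expands A B)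
    (i : Box s) (hmax : LocallyMaximal A Y i) :
    LocallyMaximal B Y i :=
  hmax.of_forall_exists_boxLE hAB.exists_boxLE

/-- local maximality passes from `A` to any `B` with `A ≤ B < Y`. -/
theorem locallyMaximal_of_le (s : ℕ) (hs : 1 ≤ s)
    (A B Y : Finset (Box s))
    (hA : Admissible A) (hB : Admissible B) (hY : Admissible Y)
    (hAB : Expands A B) (hBY : Expands B Y) (hBneY : B ≠ Y)
    (i : Box s) (hi : i ∈ Y) (hmax : LocallyMaximal A Y i) :
    LocallyMaximal B Y i :=
  locallyMaximal_of_le_general s A B Y hAB i hmax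

end BrinThompson
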